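/- arXiv:2308.07331 — 5 statements merged into one kernel-verified Lean document; each statement's English description precedes it below -/
import Mathlib

section
/- Let n ≥ 2, θ ∈ ℝ, and α ∈ ℝ. For every ξ ∈ ℝⁿ at which q_θ(ξ) does not lie on the non-positive real axis, the complex power u_α(ξ) := q_θ(ξ)^α (principal branch) satisfies the Poisson-type identity Δ_θ u_α(ξ) = 2α(n + 2(α − 1)) · q_θ(ξ)^{α−1}; in particular for α = −1 the right-hand side vanishes and u_{−1} solves the θ-Laplace equation. -/
/-- Unmixed second partial derivative in coordinate direction `j` of a complex-valued
function on `ℝⁿ`. -/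
noncomputable def partial2 {n : ℕ} (u : (Fin n → ℝ) → ℂ) (j : Fin n) (ξ : Fin n → ℝ) : ℂ :=
  iteratedDeriv 2 (fun t : ℝ => u (Function.update ξ j t)) (ξ j)

/-- The θ-Laplace–Beltrami operator `Δ_θ u = e^{−iπθ} ∂₀² u − Σ_{j≥1} ∂ⱼ² u`. -/
noncomputable def thetaLap {n : ℕ} [NeZero n] (θ : ℝ) (u : (Fin n → ℝ) → ℂ)
    (ξ : Fin n → ℝ) : ℂ :=
  Complex.exp (-(Real.pi * θ) * Complex.I) * partial2 u 0 ξ -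
    ∑ j ∈ Finset.univ.filter (fun j : Fin n => j ≠ 0), partial2 u j ξ

/-- The θ-metric quadratic form `q_θ(ξ) = e^{iπθ} ξ₀² − Σ_{j≥1} ξⱼ²`. -/
noncomputable def qform (n : ℕ) [NeZero n] (θ : ℝ) (ξ : Fin n → ℝ) : ℂ :=
  Complex.exp (Real.pi * θ * Complex.I) * (ξ 0 : ℂ) ^ 2 -
    ∑ j ∈ Finset.univ.filter (fun j : Fin n => j ≠ 0), (ξ j : ℂ) ^ 2

/-!
Along the coordinate line through `ξ` in direction `j`, a diagonal form `Q = Σ cⱼ ξⱼ²` is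
`cⱼ t² + const`, so `∂ⱼ² Q^β = β(β-1) Q^{β-2} (2cⱼξⱼ)² + 2β cⱼ Q^{β-1}`. The operator `Δ_θ` is
`Σ cⱼ⁻¹ ∂ⱼ²` for the coefficients `cⱼ` of `q_θ`, so the first terms add up to
`4β(β-1) Q^{β-2} Σ cⱼξⱼ² = 4β(β-1) Q^{β-1}` and the second ones to `2nβ Q^{β-1}`.
-/

open Complex Filter Finset Function Topology

lemma hasDerivAt_quadratic_cpow (c b β : ℂ) {z : ℂ} (h : c * z ^ 2 + b ∈ slitPlane) :
    HasDerivAt (fun w : ℂ => (c * w ^ 2 + b) ^ β)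
      (β * (c * z ^ 2 + b) ^ (β - 1) * (2 * c * z)) z := by
  refine (((((hasDerivAt_id z).pow 2).const_mul c).add_const b).cpow_const h).congr_deriv ?_
  simp only [Pi.pow_apply, id, Nat.cast_ofNat]
  ring

lemma iteratedDeriv_two_quadratic_cpow (c b β : ℂ) {x : ℝ}
    (h : c * (x : ℂ) ^ 2 + b ∈ slitPlane) :
    iteratedDeriv 2 (fun t : ℝ => (c * (t : ℂ) ^ 2 + b) ^ β) x =
      β * (β - 1) * (c * (x : ℂ) ^ 2 + b) ^ (β - 2) * (2 * c * x) ^ 2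
        + β * (c * (x : ℂ) ^ 2 + b) ^ (β - 1) * (2 * c) := by
  have hslit : ∀ᶠ t : ℝ in 𝓝 x, c * (t : ℂ) ^ 2 + b ∈ slitPlane :=
    (by fun_prop : Continuous fun t : ℝ => c * (t : ℂ) ^ 2 + b).continuousAt.preimage_mem_nhds
      (isOpen_slitPlane.mem_nhds h)
  have hderiv : deriv (fun t : ℝ => (c * (t : ℂ) ^ 2 + b) ^ β)
      =ᶠ[𝓝 x] fun t : ℝ => β * (c * (t : ℂ) ^ 2 + b) ^ (β - 1) * (2 * c * t) :=
    hslit.mono fun t ht => (hasDerivAt_quadratic_cpow c b β ht).comp_ofReal.deriv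
  rw [iteratedDeriv_succ, iteratedDeriv_one, hderiv.deriv_eq]
  refine HasDerivAt.deriv ((((hasDerivAt_quadratic_cpow c b (β - 1) h).const_mul β).mul
    ((hasDerivAt_id (x : ℂ)).const_mul (2 * c))).comp_ofReal.congr_deriv ?_)
  rw [sub_sub, one_add_one_eq_two, id]
  ring

section DiagQuadForm

variable {ι : Type*} [Fintype ι]

noncomputable def diagQuadForm (c : ι → ℂ) (x : ι → ℝ) : ℂ :=
  ∑ j, c j * (x j : ℂ) ^ 2

lemma diagQuadForm_update [DecidableEq ι] (c : ι → ℂ) (x : ι → ℝ) (j : ι) (t : ℝ) :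
    diagQuadForm c (update x j t) =
      c j * (t : ℂ) ^ 2 + (diagQuadForm c x - c j * (x j : ℂ) ^ 2) := by
  have hsummand : (fun k => c k * (update x j t k : ℂ) ^ 2) =
      update (fun k => c k * (x k : ℂ) ^ 2) j (c j * (t : ℂ) ^ 2) := by
    ext k
    rcases eq_or_ne k j with rfl | hk <;> simp [*]
  rw [diagQuadForm, hsummand, sum_update_of_mem (mem_univ j), diagQuadForm,
    ← add_sum_erase univ _ (mem_univ j), ← erase_eq]
  ring

end DiagQuadForm

lemma partial2_diagQuadForm_cpow {n : ℕ} (c : Fin n → ℂ) (β : ℂ) {ξ : Fin n → ℝ}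
    (hξ : diagQuadForm c ξ ∈ slitPlane) (j : Fin n) :
    partial2 (fun x => diagQuadForm c x ^ β) j ξ =
      β * (β - 1) * diagQuadForm c ξ ^ (β - 2) * (2 * c j * ξ j) ^ 2
        + β * diagQuadForm c ξ ^ (β - 1) * (2 * c j) := by
  have hrestore : c j * (ξ j : ℂ) ^ 2 + (diagQuadForm c ξ - c j * (ξ j : ℂ) ^ 2) =
      diagQuadForm c ξ := add_sub_cancel _ _
  rw [partial2]
  simp only [diagQuadForm_update]
  rw [iteratedDeriv_two_quadratic_cpow _ _ _ (by rwa [hrestore]), hrestore]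

lemma sum_inv_mul_partial2_diagQuadForm_cpow {n : ℕ} {c : Fin n → ℂ} (hc : ∀ j, c j ≠ 0)
    (β : ℂ) {ξ : Fin n → ℝ} (hξ : diagQuadForm c ξ ∈ slitPlane) :
    ∑ j, (c j)⁻¹ * partial2 (fun x => diagQuadForm c x ^ β) j ξ =
      2 * β * (n + 2 * (β - 1)) * diagQuadForm c ξ ^ (β - 1) := by
  set Q := diagQuadForm c ξ with hQ
  have hsummand (j : Fin n) : (c j)⁻¹ * partial2 (fun x => diagQuadForm c x ^ β) j ξ =
      4 * β * (β - 1) * Q ^ (β - 2) * (c j * (ξ j : ℂ) ^ 2) + 2 * β * Q ^ (β - 1) := by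
    rw [partial2_diagQuadForm_cpow c β hξ]
    field_simp [hc j]
    ring
  have hpow : Q ^ (β - 1) = Q ^ (β - 2) * Q := by
    rw [show β - 1 = β - 2 + 1 by ring, cpow_add _ _ (slitPlane_ne_zero hξ), cpow_one]
  rw [sum_congr rfl fun j _ => hsummand j, sum_add_distrib, ← mul_sum, ← diagQuadForm, ← hQ,
    sum_const, card_univ, Fintype.card_fin, nsmul_eq_mul, hpow]
  ring

noncomputable def qformCoeff (θ : ℝ) {n : ℕ} [NeZero n] (j : Fin n) : ℂ :=
  if j = 0 then exp (Real.pi * θ * I) else -1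

lemma qformCoeff_ne_zero (θ : ℝ) {n : ℕ} [NeZero n] (j : Fin n) : qformCoeff θ j ≠ 0 := by
  unfold qformCoeff
  split_ifs
  exacts [exp_ne_zero _, neg_ne_zero.mpr one_ne_zero]

lemma sum_fin_eq_add_sum_filter_ne_zero {M : Type*} [AddCommMonoid M] {n : ℕ} [NeZero n]
    (f : Fin n → M) :
    ∑ j, f j = f 0 + ∑ j ∈ univ.filter (fun j : Fin n => j ≠ 0), f j := by
  rw [filter_ne', add_sum_erase _ _ (mem_univ 0)]

lemma qform_eq_diagQuadForm (n : ℕ) [NeZero n] (θ : ℝ) :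
    qform n θ = diagQuadForm (qformCoeff θ) := by
  ext ξ
  rw [diagQuadForm, sum_fin_eq_add_sum_filter_ne_zero, qform, qformCoeff, if_pos rfl,
    sub_eq_add_neg, ← sum_neg_distrib]
  congr 1
  refine sum_congr rfl fun j hj => ?_
  rw [qformCoeff, if_neg (mem_filter.mp hj).2, neg_one_mul]

lemma thetaLap_eq_sum_inv_qformCoeff_mul {n : ℕ} [NeZero n] (θ : ℝ) (u : (Fin n → ℝ) → ℂ)
    (ξ : Fin n → ℝ) :
    thetaLap θ u ξ = ∑ j, (qformCoeff θ j)⁻¹ * partial2 u j ξ := by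
  rw [sum_fin_eq_add_sum_filter_ne_zero, thetaLap, qformCoeff, if_pos rfl, ← exp_neg, neg_mul,
    sub_eq_add_neg, ← sum_neg_distrib]
  congr 1
  refine sum_congr rfl fun j hj => ?_
  rw [qformCoeff, if_neg (mem_filter.mp hj).2, inv_neg, inv_one, neg_one_mul]

theorem thetaLap_qform_cpow_general (n : ℕ) [NeZero n] (θ α : ℝ) (ξ : Fin n → ℝ)
    (hξ : qform n θ ξ ∈ Complex.slitPlane) :
    thetaLap θ (fun x => qform n θ x ^ (α : ℂ)) ξ =
      2 * (α : ℂ) * ((n : ℂ) + 2 * ((α : ℂ) - 1)) * qform n θ ξ ^ ((α : ℂ) - 1) := by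
  rw [qform_eq_diagQuadForm] at hξ ⊢
  rw [thetaLap_eq_sum_inv_qformCoeff_mul]
  exact sum_inv_mul_partial2_diagQuadForm_cpow (qformCoeff_ne_zero θ) α hξ

/-- for `n ≥ 2`, wherever `q_θ(ξ)` avoids the non-positive real axis
(`Complex.slitPlane`), the principal power `u_α = q_θ^α` satisfies
`Δ_θ u_α = 2α(n + 2(α − 1)) q_θ^{α−1}`. -/
theorem thetaLap_qform_cpow (n : ℕ) [NeZero n] (hn : 2 ≤ n) (θ α : ℝ) (ξ : Fin n → ℝ)
    (hξ : qform n θ ξ ∈ Complex.slitPlane) :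
    thetaLap θ (fun x => qform n θ x ^ (α : ℂ)) ξ =
      2 * (α : ℂ) * ((n : ℂ) + 2 * ((α : ℂ) - 1)) * qform n θ ξ ^ ((α : ℂ) - 1) :=
  thetaLap_qform_cpow_general n θ α ξ hξ
end

section
/- Let n ≥ 2 and θ ∈ ℝ. For every ξ ∈ ℝⁿ at which q_θ(ξ) does not lie on the non-positive real axis, the function u(ξ) := log q_θ(ξ) (principal branch of the complex logarithm) satisfies Δ_θ u(ξ) = 2(n − 2) · q_θ(ξ)^{−1}. -/
open Complex Finset

noncomputable def diagQuad {n : ℕ} (a : Fin n → ℂ) (x : Fin n → ℝ) : ℂ :=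
  ∑ k, a k * (x k : ℂ) ^ 2

lemma hasDerivAt_quadratic (c d : ℂ) (t : ℝ) :
    HasDerivAt (fun s : ℝ => c * (s : ℂ) ^ 2 + d) (2 * c * t) t := by
  have := (((hasDerivAt_id t).ofReal_comp.pow 2).const_mul c).add_const d
  exact this.congr_deriv (by simp only [Nat.cast_ofNat, id_eq, ofReal_one, mul_one]; ring)

lemma iteratedDeriv_two_log_quadratic (c d : ℂ) (x : ℝ)
    (hx : c * (x : ℂ) ^ 2 + d ∈ slitPlane) :
    iteratedDeriv 2 (fun t : ℝ => log (c * (t : ℂ) ^ 2 + d)) x =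
      2 * c / (c * (x : ℂ) ^ 2 + d) - (2 * c * x / (c * (x : ℂ) ^ 2 + d)) ^ 2 := by
  have hcont : Continuous fun t : ℝ => c * (t : ℂ) ^ 2 + d := by fun_prop
  have hderiv : deriv (fun t : ℝ => log (c * (t : ℂ) ^ 2 + d)) =ᶠ[nhds x]
      fun t : ℝ => 2 * c * t / (c * (t : ℂ) ^ 2 + d) := by
    filter_upwards [(isOpen_slitPlane.preimage hcont).mem_nhds hx] with t ht
    exact ((hasDerivAt_quadratic c d t).clog_real ht).deriv
  have hlin : HasDerivAt (fun t : ℝ => 2 * c * (t : ℂ)) (2 * c) x := by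
    simpa using (hasDerivAt_id x).ofReal_comp.const_mul (2 * c)
  rw [iteratedDeriv_succ, iteratedDeriv_one, hderiv.deriv_eq,
    (hlin.fun_div (hasDerivAt_quadratic c d x) (slitPlane_ne_zero hx)).deriv]
  field_simp

lemma diagQuad_update {n : ℕ} (a : Fin n → ℂ) (ξ : Fin n → ℝ) (j : Fin n) (t : ℝ) :
    diagQuad a (Function.update ξ j t) =
      a j * (t : ℂ) ^ 2 + (diagQuad a ξ - a j * (ξ j : ℂ) ^ 2) := by
  have hterm : (fun k => a k * (Function.update ξ j t k : ℂ) ^ 2) =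
      Function.update (fun k => a k * (ξ k : ℂ) ^ 2) j (a j * (t : ℂ) ^ 2) := by
    funext k
    rcases eq_or_ne k j with rfl | hk <;> simp [*]
  rw [diagQuad, diagQuad, hterm, sum_update_of_mem (mem_univ j),
    sum_eq_add_sum_sdiff_singleton_of_mem (mem_univ j)]
  ring

lemma partial2_log_diagQuad {n : ℕ} (a : Fin n → ℂ) (ξ : Fin n → ℝ) (j : Fin n)
    (hξ : diagQuad a ξ ∈ slitPlane) :
    partial2 (fun x => log (diagQuad a x)) j ξ =
      2 * a j / diagQuad a ξ - (2 * a j * ξ j / diagQuad a ξ) ^ 2 := by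
  have := iteratedDeriv_two_log_quadratic (a j) (diagQuad a ξ - a j * (ξ j : ℂ) ^ 2) (ξ j)
    (by rwa [add_sub_cancel])
  simpa only [partial2, diagQuad_update, add_sub_cancel] using this

theorem sum_inv_mul_partial2_log_diagQuad {n : ℕ} (a : Fin n → ℂ) (ha : ∀ j, a j ≠ 0)
    (ξ : Fin n → ℝ) (hξ : diagQuad a ξ ∈ slitPlane) :
    ∑ j, (a j)⁻¹ * partial2 (fun x => log (diagQuad a x)) j ξ =
      2 * ((n : ℂ) - 2) * (diagQuad a ξ)⁻¹ := by
  have hQ : diagQuad a ξ ≠ 0 := slitPlane_ne_zero hξ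
  have hterm : ∀ j, (a j)⁻¹ * partial2 (fun x => log (diagQuad a x)) j ξ =
      2 / diagQuad a ξ - 4 / diagQuad a ξ ^ 2 * (a j * (ξ j : ℂ) ^ 2) := by
    intro j
    rw [partial2_log_diagQuad a ξ j hξ]
    field_simp [ha j]
    ring
  simp only [hterm, sum_sub_distrib, ← mul_sum, sum_const, card_univ, Fintype.card_fin,
    nsmul_eq_mul]
  rw [← diagQuad]
  field_simp
  ring

lemma sum_ite_zero_neg_one_mul {n : ℕ} [NeZero n] (c : ℂ) (f : Fin n → ℂ) :
    ∑ j, (if j = 0 then c else -1) * f j =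
      c * f 0 - ∑ j ∈ univ.filter (fun j : Fin n => j ≠ 0), f j := by
  rw [filter_ne', ← add_sum_erase _ _ (mem_univ 0), if_pos rfl, sub_eq_add_neg,
    ← sum_neg_distrib]
  congr 1
  exact sum_congr rfl fun j hj => by simp [ne_of_mem_erase hj]

theorem thetaLap_qform_log_general (n : ℕ) [NeZero n] (θ : ℝ) (ξ : Fin n → ℝ)
    (hξ : qform n θ ξ ∈ Complex.slitPlane) :
    thetaLap θ (fun x => Complex.log (qform n θ x)) ξ =
      2 * ((n : ℂ) - 2) * (qform n θ ξ)⁻¹ := by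
  set a : Fin n → ℂ := fun j => if j = 0 then exp (Real.pi * θ * I) else -1
  have hq : qform n θ = diagQuad a :=
    funext fun x => (sum_ite_zero_neg_one_mul _ fun j => (x j : ℂ) ^ 2).symm
  have ha : ∀ j, a j ≠ 0 := fun j => by by_cases hj : j = 0 <;> simp [a, hj, exp_ne_zero]
  have hinv : ∀ j, (if j = 0 then exp (-(Real.pi * θ) * I) else -1) = (a j)⁻¹ := fun j => by
    by_cases hj : j = 0 <;> simp [a, hj, neg_mul, exp_neg]
  rw [thetaLap, ← sum_ite_zero_neg_one_mul _ fun j => partial2 (fun x => log (qform n θ x)) j ξ, hq]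
  simp only [hinv]
  exact sum_inv_mul_partial2_log_diagQuad a ha ξ (hq ▸ hξ)

/-- for `n ≥ 2`, wherever `q_θ(ξ)` avoids the non-positive real axis
(`Complex.slitPlane`), the principal logarithm `u = log q_θ` satisfies
`Δ_θ u = 2(n − 2) q_θ⁻¹`. -/
theorem thetaLap_qform_log (n : ℕ) [NeZero n] (hn : 2 ≤ n) (θ : ℝ) (ξ : Fin n → ℝ)
    (hξ : qform n θ ξ ∈ Complex.slitPlane) :
    thetaLap θ (fun x => Complex.log (qform n θ x)) ξ =
      2 * ((n : ℂ) - 2) * (qform n θ ξ)⁻¹ :=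
  thetaLap_qform_log_general n θ ξ hξ
end

section
/- Let P : ℝ³ → ℝ be a polynomial function that is homogeneous of degree l (P(c·x) = c^l P(x) for all c ∈ ℝ, x ∈ ℝ³) and harmonic (Σ_{j=1}^{3} ∂ⱼ² P = 0 on ℝ³). Then the irregular solid harmonic x ↦ ‖x‖^{−2l−1} · P(x) is harmonic on ℝ³ \ {0}, i.e. Σ_{j=1}^{3} ∂ⱼ² (‖x‖^{−2l−1} P(x)) = 0 for all x ≠ 0. -/
/-!
With `r = ‖x‖`, the product rule gives `Δ(r^a P) = (Δ r^a) P + 2 ∇r^a · ∇P + r^a ΔP`.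
In `ℝ³` one has `∇ r^a = a r^(a-2) x` and `Δ r^a = a (a+1) r^(a-2)`, while Euler's identity
for homogeneous functions gives `x · ∇P = l P`. Hence `Δ(r^a P) = a (a + 1 + 2l) r^(a-2) P`,
which vanishes for `a = -2l-1`.
-/

/-- The (flat, three-dimensional) Laplacian: sum of the three unmixed second partial
derivatives of a real-valued function on `ℝ³`. -/
noncomputable def laplacian3 (u : (Fin 3 → ℝ) → ℝ) (x : Fin 3 → ℝ) : ℝ :=
  ∑ j : Fin 3, iteratedDeriv 2 (fun t : ℝ => u (Function.update x j t)) (x j)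

/-- Euclidean norm on `ℝ³`. -/
noncomputable def enorm3 (x : Fin 3 → ℝ) : ℝ :=
  Real.sqrt (∑ j : Fin 3, x j ^ 2)

open Function Finset Filter Topology

theorem fderiv_apply_self_of_homogeneous {E F : Type*} [NormedAddCommGroup E] [NormedSpace ℝ E]
    [NormedAddCommGroup F] [NormedSpace ℝ F] {P : E → F} {x : E} {l : ℕ}
    (hP : DifferentiableAt ℝ P x) (hhom : ∀ c : ℝ, P (c • x) = c ^ l • P x) :
    fderiv ℝ P x x = (l : ℝ) • P x := by
  have hline : HasDerivAt (fun c : ℝ => P (c • x)) (fderiv ℝ P x x) 1 := by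
    have hP' : HasFDerivAt P (fderiv ℝ P x) ((1 : ℝ) • x) := by rw [one_smul]; exact hP.hasFDerivAt
    have hsmul : HasDerivAt (fun c : ℝ => c • x) x 1 := by
      simpa using (hasDerivAt_id' (1 : ℝ)).smul_const x
    exact hP'.comp_hasDerivAt 1 hsmul
  have hpow : HasDerivAt (fun c : ℝ => P (c • x)) ((l : ℝ) • P x) 1 := by
    simp_rw [hhom]
    simpa using (hasDerivAt_pow l (1 : ℝ)).smul_const (P x)
  exact hline.unique hpow

theorem ContinuousLinearMap.apply_eq_sum_mul_apply_single {ι : Type*} [Fintype ι] [DecidableEq ι]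
    (L : (ι → ℝ) →L[ℝ] ℝ) (x : ι → ℝ) : L x = ∑ i, x i * L (Pi.single i 1) := by
  conv_lhs => rw [pi_eq_sum_univ' x]
  simp [map_sum, map_smul]

theorem iteratedDeriv_two_mul {𝕜 𝔸 : Type*} [NontriviallyNormedField 𝕜] [NormedRing 𝔸]
    [NormedAlgebra 𝕜 𝔸] {f g : 𝕜 → 𝔸} {t : 𝕜} (hf : ContDiffAt 𝕜 2 f t)
    (hg : ContDiffAt 𝕜 2 g t) :
    iteratedDeriv 2 (fun s => f s * g s) t =
      iteratedDeriv 2 f t * g t + 2 * (deriv f t * deriv g t) + f t * iteratedDeriv 2 g t := by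
  rw [iteratedDeriv_fun_mul hf hg]
  simp [Finset.sum_range_succ, mul_assoc]
  abel

section Lines

variable {ι F : Type*} [Fintype ι] [DecidableEq ι] [NormedAddCommGroup F] [NormedSpace ℝ F]
  {u : (ι → ℝ) → F} {x : ι → ℝ}

theorem ContDiffAt.comp_update {n : WithTop ℕ∞} (hu : ContDiffAt ℝ n u x) (j : ι) :
    ContDiffAt ℝ n (fun t => u (update x j t)) (x j) := by
  have hu' : ContDiffAt ℝ n u (update x j (x j)) := by rwa [update_eq_self]
  exact hu'.comp (x j) (contDiff_update n x j).contDiffAt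

theorem deriv_comp_update (hu : DifferentiableAt ℝ u x) (j : ι) :
    deriv (fun t => u (update x j t)) (x j) = fderiv ℝ u x (Pi.single j 1) := by
  have hu' : HasFDerivAt u (fderiv ℝ u x) (update x j (x j)) := by
    rw [update_eq_self]; exact hu.hasFDerivAt
  exact (hu'.comp_hasDerivAt (x j) (hasDerivAt_update x j (x j))).deriv

end Lines

theorem laplacian3_mul {u v : (Fin 3 → ℝ) → ℝ} {x : Fin 3 → ℝ} (hu : ContDiffAt ℝ 2 u x)
    (hv : ContDiffAt ℝ 2 v x) :
    laplacian3 (fun y => u y * v y) x =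
      laplacian3 u x * v x
        + 2 * ∑ j, fderiv ℝ u x (Pi.single j 1) * fderiv ℝ v x (Pi.single j 1)
        + u x * laplacian3 v x := by
  simp only [laplacian3, Finset.sum_mul, Finset.mul_sum, ← Finset.sum_add_distrib]
  refine Finset.sum_congr rfl fun j _ => ?_
  rw [iteratedDeriv_two_mul (hu.comp_update j) (hv.comp_update j),
    deriv_comp_update (hu.differentiableAt two_ne_zero),
    deriv_comp_update (hv.differentiableAt two_ne_zero), update_eq_self]

theorem hasDerivAt_sqrt_add_sq_zpow (b : ℤ) {s t : ℝ} (h : 0 < s + t ^ 2) :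
    HasDerivAt (fun u => √(s + u ^ 2) ^ b) (b * t * √(s + t ^ 2) ^ (b - 2)) t := by
  have hsqrt : √(s + t ^ 2) ≠ 0 := by positivity
  have hinner : HasDerivAt (fun u => √(s + u ^ 2)) (t / √(s + t ^ 2)) t :=
    ((Real.hasDerivAt_sqrt h.ne').comp t ((hasDerivAt_pow 2 t).const_add s)).congr_deriv
      (by field_simp; ring)
  refine ((hasDerivAt_zpow b _ (Or.inl hsqrt)).comp t hinner).congr_deriv ?_
  rw [show b - 2 = b - 1 - 1 by ring, zpow_sub_one₀ hsqrt (b - 1)]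
  ring

theorem iteratedDeriv_two_sqrt_add_sq_zpow (b : ℤ) {s t : ℝ} (h : 0 < s + t ^ 2) :
    iteratedDeriv 2 (fun u => √(s + u ^ 2) ^ b) t =
      b * √(s + t ^ 2) ^ (b - 2) + b * (b - 2) * t ^ 2 * √(s + t ^ 2) ^ (b - 4) := by
  have hopen : IsOpen {u : ℝ | 0 < s + u ^ 2} := isOpen_lt continuous_const (by fun_prop)
  have hderiv :
      deriv (fun u => √(s + u ^ 2) ^ b) =ᶠ[𝓝 t] fun u => b * u * √(s + u ^ 2) ^ (b - 2) :=
    eventually_of_mem (hopen.mem_nhds h) fun u hu => (hasDerivAt_sqrt_add_sq_zpow b hu).deriv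
  have hsecond : HasDerivAt (fun u => b * u * √(s + u ^ 2) ^ (b - 2))
      (b * √(s + t ^ 2) ^ (b - 2) + b * t * ((b - 2 : ℤ) * t * √(s + t ^ 2) ^ (b - 2 - 2))) t :=
    (((hasDerivAt_id' t).const_mul (b : ℝ)).mul (hasDerivAt_sqrt_add_sq_zpow (b - 2) h)).congr_deriv
      (by ring)
  rw [iteratedDeriv_succ, iteratedDeriv_one, hderiv.deriv_eq, hsecond.deriv,
    show b - 2 - 2 = b - 4 by ring]
  push_cast
  ring

section EuclideanNorm

variable {x : Fin 3 → ℝ}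

theorem enorm3_update (x : Fin 3 → ℝ) (j : Fin 3) (t : ℝ) :
    enorm3 (update x j t) = √((∑ i ∈ univ.erase j, x i ^ 2) + t ^ 2) := by
  rw [enorm3, ← Finset.add_sum_erase _ _ (mem_univ j), update_self, add_comm]
  congr 2
  exact Finset.sum_congr rfl fun i hi => by rw [update_of_ne (ne_of_mem_erase hi)]

theorem enorm3_eq_sqrt_sum_erase_add (x : Fin 3 → ℝ) (j : Fin 3) :
    enorm3 x = √((∑ i ∈ univ.erase j, x i ^ 2) + x j ^ 2) := by
  simpa using enorm3_update x j (x j)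

theorem sq_enorm3 (x : Fin 3 → ℝ) : enorm3 x ^ 2 = ∑ j, x j ^ 2 :=
  Real.sq_sqrt (by positivity)

theorem enorm3_pos (hx : x ≠ 0) : 0 < enorm3 x := by
  obtain ⟨i, hi⟩ := Function.ne_iff.mp hx
  exact Real.sqrt_pos.mpr
    (Finset.sum_pos' (fun _ _ => sq_nonneg _) ⟨i, mem_univ i, sq_pos_of_ne_zero hi⟩)

theorem contDiffAt_enorm3_zpow (hx : x ≠ 0) (a : ℤ) {n : WithTop ℕ∞} :
    ContDiffAt ℝ n (fun y => enorm3 y ^ a) x := by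
  have hpos := enorm3_pos hx
  have hsqrt : ContDiffAt ℝ n enorm3 x :=
    ContDiffAt.sqrt (f := fun y : Fin 3 → ℝ => ∑ j, y j ^ 2) (by fun_prop)
      (Real.sqrt_pos.mp hpos).ne'
  simp_rw [← Real.rpow_intCast]
  exact (Real.contDiffAt_rpow_const_of_ne hpos.ne').comp x hsqrt

theorem sum_erase_add_sq_pos (hx : x ≠ 0) (j : Fin 3) :
    0 < (∑ i ∈ univ.erase j, x i ^ 2) + x j ^ 2 := by
  have := enorm3_pos hx
  rwa [enorm3_eq_sqrt_sum_erase_add x j, Real.sqrt_pos] at this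

theorem fderiv_enorm3_zpow (hx : x ≠ 0) (a : ℤ) (j : Fin 3) :
    fderiv ℝ (fun y => enorm3 y ^ a) x (Pi.single j 1) = a * x j * enorm3 x ^ (a - 2) := by
  rw [← deriv_comp_update ((contDiffAt_enorm3_zpow hx a (n := 1)).differentiableAt one_ne_zero)]
  simp_rw [enorm3_update]
  rw [(hasDerivAt_sqrt_add_sq_zpow a (sum_erase_add_sq_pos hx j)).deriv,
    ← enorm3_eq_sqrt_sum_erase_add]

theorem laplacian3_enorm3_zpow (hx : x ≠ 0) (a : ℤ) :
    laplacian3 (fun y => enorm3 y ^ a) x = a * (a + 1) * enorm3 x ^ (a - 2) := by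
  have hline : ∀ j, iteratedDeriv 2 (fun t => enorm3 (update x j t) ^ a) (x j) =
      a * enorm3 x ^ (a - 2) + a * (a - 2) * x j ^ 2 * enorm3 x ^ (a - 4) := by
    intro j
    simp_rw [enorm3_update]
    rw [iteratedDeriv_two_sqrt_add_sq_zpow a (sum_erase_add_sq_pos hx j),
      ← enorm3_eq_sqrt_sum_erase_add]
  have hpow : enorm3 x ^ (a - 2) = enorm3 x ^ 2 * enorm3 x ^ (a - 4) := by
    rw [← zpow_natCast, ← zpow_add₀ (enorm3_pos hx).ne']
    ring_nf
  rw [laplacian3, Finset.sum_congr rfl fun j _ => hline j, hpow, sq_enorm3, Fin.sum_univ_three,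
    Fin.sum_univ_three]
  ring

end EuclideanNorm

/-- if `P : ℝ³ → ℝ` is a polynomial function, homogeneous of degree `l`
and harmonic, then the irregular solid harmonic `x ↦ ‖x‖^(−2l−1) P x` is harmonic on
`ℝ³ \ {0}`. -/
theorem irregular_solid_harmonic (l : ℕ) (P : (Fin 3 → ℝ) → ℝ)
    (hpoly : ∃ p : MvPolynomial (Fin 3) ℝ, ∀ x, P x = MvPolynomial.eval x p)
    (hhom : ∀ (c : ℝ) (x : Fin 3 → ℝ), P (c • x) = c ^ l * P x)
    (hharm : ∀ x : Fin 3 → ℝ, laplacian3 P x = 0) :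
    ∀ x : Fin 3 → ℝ, x ≠ 0 →
      laplacian3 (fun y => enorm3 y ^ (-(2 * (l : ℤ)) - 1) * P y) x = 0 := by
  obtain ⟨p, hp⟩ := hpoly
  have hP : ContDiff ℝ 2 P := by
    rw [funext hp]
    exact (AnalyticOnNhd.eval_mvPolynomial p).contDiff
  intro x hx
  set a : ℤ := -(2 * (l : ℤ)) - 1
  have heuler : ∑ j, x j * fderiv ℝ P x (Pi.single j 1) = l * P x := by
    rw [← ContinuousLinearMap.apply_eq_sum_mul_apply_single]
    exact fderiv_apply_self_of_homogeneous (hP.differentiable two_ne_zero x) (hhom · x)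
  have hcross :
      ∑ j, fderiv ℝ (fun y => enorm3 y ^ a) x (Pi.single j 1) * fderiv ℝ P x (Pi.single j 1) =
        a * enorm3 x ^ (a - 2) * (l * P x) := by
    simp_rw [fderiv_enorm3_zpow hx, ← heuler, Finset.mul_sum]
    exact Finset.sum_congr rfl fun j _ => by ring
  rw [laplacian3_mul (contDiffAt_enorm3_zpow hx a) hP.contDiffAt, laplacian3_enorm3_zpow hx,
    hharm x, hcross]
  push_cast [a]
  ring
end

section
/- Let z ∈ ℂ with Re z > 0 and Im z < 0, and let t ∈ ℝ. Then the function E ↦ e^{−i t E} / (z² − E²) is Lebesgue integrable on ℝ (the denominator has no real zeros), and (1/2π) ∫_ℝ e^{−i t E} / (z² − E²) dE = i · e^{−i |t| z} / (2z). -/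
open MeasureTheory

open Real Set Filter FourierTransform in
private lemma cexp_integrableOn_Ioi {c : ℂ} (hc : c.re < 0) :
    IntegrableOn (fun s : ℝ => Complex.exp (c * s)) (Ioi (0:ℝ)) := by
  refine Integrable.mono' (g := fun s : ℝ => Real.exp (-(-c.re) * s))
    (exp_neg_integrableOn_Ioi 0 (by linarith))
    ((Complex.continuous_exp.comp (by continuity)).aestronglyMeasurable.restrict) ?_
  filter_upwards with s
  rw [Complex.norm_exp]
  apply le_of_eq
  congr 1
  simp [Complex.mul_re]

open Real Set Filter in
private lemma integral_cexp_Ioi {c : ℂ} (hc : c.re < 0) :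
    ∫ s in Ioi (0:ℝ), Complex.exp (c * s) = -1 / c := by
  have hc0 : c ≠ 0 := by
    intro h; rw [h] at hc; simp at hc
  have hderiv : ∀ x : ℝ, HasDerivAt (fun s : ℝ => Complex.exp (c * s) / c)
      (Complex.exp (c * x)) x := by
    intro x
    have h1 : HasDerivAt (fun s : ℝ => c * (s : ℂ)) c x := by
      simpa using (HasDerivAt.ofReal_comp (hasDerivAt_id x)).const_mul c
    have h2 := h1.cexp.div_const c
    simpa [mul_div_cancel_right₀ _ hc0] using h2
  have htend : Tendsto (fun s : ℝ => Complex.exp (c * s) / c) atTop (nhds 0) := by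
    rw [tendsto_zero_iff_norm_tendsto_zero]
    have heq : (fun s : ℝ => ‖Complex.exp (c * s) / c‖)
        = fun s : ℝ => Real.exp (c.re * s) / ‖c‖ := by
      ext s
      rw [norm_div, Complex.norm_exp]
      congr 2
      simp [Complex.mul_re]
    rw [heq]
    have h3 : Tendsto (fun s : ℝ => c.re * s) atTop atBot := by
      simpa [mul_comm] using Filter.Tendsto.atTop_mul_const_of_neg hc (tendsto_id (α := ℝ))
    simpa using (Real.tendsto_exp_atBot.comp h3).div_const ‖c‖
  have h := integral_Ioi_of_hasDerivAt_of_tendsto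
      (f := fun s : ℝ => Complex.exp (c * s) / c) (f' := fun s : ℝ => Complex.exp (c * s))
      (a := 0) ((hderiv 0).continuousAt.continuousWithinAt)
      (fun x _ => hderiv x) (cexp_integrableOn_Ioi hc) htend
  rw [h]
  simp [neg_div]

open Real Set Filter in
private lemma exp_abs_key {c : ℂ} (hc : c.re < 0) (w : ℝ) :
    Integrable (fun s : ℝ => Complex.exp (-Complex.I * w * s + c * |s|)) ∧
      ∫ s : ℝ, Complex.exp (-Complex.I * w * s + c * |s|) = -2 * c / (c ^ 2 + w ^ 2) := by
  set c₁ : ℂ := -Complex.I * w + c with hc₁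
  set c₂ : ℂ := Complex.I * w + c with hc₂
  have h1re : c₁.re < 0 := by
    simpa [hc₁, Complex.add_re, Complex.mul_re] using hc
  have h2re : c₂.re < 0 := by
    simpa [hc₂, Complex.add_re, Complex.mul_re] using hc
  have hg₁ : IntegrableOn (fun s : ℝ => Complex.exp (c₁ * s)) (Ioi (0:ℝ)) :=
    cexp_integrableOn_Ioi h1re
  have hg₂ : IntegrableOn (fun s : ℝ => Complex.exp (c₂ * s)) (Ioi (0:ℝ)) :=
    cexp_integrableOn_Ioi h2re
  have hind₁ : Integrable ((Ioi (0:ℝ)).indicator fun s : ℝ => Complex.exp (c₁ * s)) :=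
    (integrable_indicator_iff measurableSet_Ioi).2 hg₁
  have hind₂ : Integrable ((Ioi (0:ℝ)).indicator fun s : ℝ => Complex.exp (c₂ * s)) :=
    (integrable_indicator_iff measurableSet_Ioi).2 hg₂
  have hind₂n : Integrable
      (fun x : ℝ => (Ioi (0:ℝ)).indicator (fun s : ℝ => Complex.exp (c₂ * s)) (-x)) :=
    hind₂.comp_neg
  have h0 : ∀ᵐ s : ℝ, s ≠ 0 := by
    refine (ae_iff ..).2 ?_
    have : {s : ℝ | ¬ s ≠ 0} = {0} := by ext s; simp
    rw [this]
    exact measure_singleton 0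
  have heq : (fun s : ℝ => Complex.exp (-Complex.I * w * s + c * |s|))
      =ᵐ[volume] fun s : ℝ =>
        (Ioi (0:ℝ)).indicator (fun s : ℝ => Complex.exp (c₁ * s)) s
          + (Ioi (0:ℝ)).indicator (fun s : ℝ => Complex.exp (c₂ * s)) (-s) := by
    filter_upwards [h0] with s hs
    rcases lt_or_gt_of_ne hs with h | h
    · rw [Set.indicator_of_notMem (by simpa using h.le),
        Set.indicator_of_mem (by simpa using h), abs_of_neg h]
      rw [zero_add]
      congr 1
      push_cast
      ring
    · rw [Set.indicator_of_mem (by simpa using h),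
        Set.indicator_of_notMem (by simpa using h.le), abs_of_pos h]
      rw [add_zero]
      congr 1
      push_cast
      ring
  have hint : Integrable (fun s : ℝ => Complex.exp (-Complex.I * w * s + c * |s|)) :=
    (hind₁.add hind₂n).congr heq.symm
  refine ⟨hint, ?_⟩
  rw [integral_congr_ae heq, integral_add hind₁ hind₂n, integral_neg_eq_self,
    integral_indicator measurableSet_Ioi, integral_indicator measurableSet_Ioi,
    integral_cexp_Ioi h1re, integral_cexp_Ioi h2re]
  have hc₁0 : c₁ ≠ 0 := fun h => by rw [h] at h1re; simp at h1re
  have hc₂0 : c₂ ≠ 0 := fun h => by rw [h] at h2re; simp at h2re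
  have hden : c ^ 2 + (w:ℂ) ^ 2 = c₁ * c₂ := by
    calc c ^ 2 + (w:ℂ) ^ 2 = c ^ 2 - (-1) * (w:ℂ) ^ 2 := by ring
    _ = c ^ 2 - Complex.I ^ 2 * (w:ℂ) ^ 2 := by rw [Complex.I_sq]
    _ = c₁ * c₂ := by rw [hc₁, hc₂]; ring
  rw [hden]
  field_simp
  ring

private lemma denom_ne_zero (z : ℂ) (hre : 0 < z.re) (him : z.im < 0) (E : ℝ) :
    z ^ 2 - (E : ℂ) ^ 2 ≠ 0 := by
  intro h
  have h1 := congrArg Complex.im h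
  simp [pow_two, Complex.mul_im, Complex.sub_im] at h1
  nlinarith

private lemma key_ineq (z : ℂ) (hre : 0 < z.re) (him : z.im < 0) (E : ℝ) :
    1 + E ^ 2 ≤ ((2 + 2 * ‖z‖ ^ 2) / (2 * z.re * (-z.im)) + 2)
      * ‖z ^ 2 - (E : ℂ) ^ 2‖ := by
  set m : ℝ := 2 * z.re * (-z.im) with hm
  have hm0 : 0 < m := by nlinarith
  have habs : 0 ≤ ‖z ^ 2 - (E : ℂ) ^ 2‖ := norm_nonneg _
  have h1 : m ≤ ‖z ^ 2 - (E : ℂ) ^ 2‖ := by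
    have := Complex.abs_im_le_norm (z ^ 2 - (E : ℂ) ^ 2)
    have him2 : (z ^ 2 - (E : ℂ) ^ 2).im = 2 * z.re * z.im := by
      simp [pow_two, Complex.mul_im, Complex.sub_im]
      ring
    rw [him2] at this
    calc m = |2 * z.re * z.im| := by rw [abs_of_nonpos (by nlinarith)]; ring
    _ ≤ _ := this
  have h2 : E ^ 2 - ‖z‖ ^ 2 ≤ ‖z ^ 2 - (E : ℂ) ^ 2‖ := by
    have hn := norm_sub_norm_le ((E:ℂ) ^ 2) (z ^ 2)
    rw [norm_sub_rev] at hn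
    simpa [norm_pow, Complex.norm_real, sq_abs] using hn
  set D : ℝ := (2 + 2 * ‖z‖ ^ 2) / m with hD
  have hD0 : 0 ≤ D := by positivity
  have hDm : D * m = 2 + 2 * ‖z‖ ^ 2 := div_mul_cancel₀ _ hm0.ne'
  by_cases hE : E ^ 2 ≤ 1 + 2 * ‖z‖ ^ 2
  · nlinarith [mul_le_mul_of_nonneg_left h1 hD0]
  · push_neg at hE
    nlinarith [mul_nonneg hD0 habs]

private lemma integrable_target (z : ℂ) (hre : 0 < z.re) (him : z.im < 0) (t : ℝ) :
    Integrable (fun E : ℝ => Complex.exp (-Complex.I * t * E) / (z ^ 2 - (E : ℂ) ^ 2)) := by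
  have hcont : Continuous (fun E : ℝ => Complex.exp (-Complex.I * t * E) / (z ^ 2 - (E : ℂ) ^ 2)) := by
    apply Continuous.div
    · exact Complex.continuous_exp.comp (by continuity)
    · continuity
    · exact fun E => denom_ne_zero z hre him E
  refine Integrable.mono'
    (g := fun E : ℝ => ((2 + 2 * ‖z‖ ^ 2) / (2 * z.re * (-z.im)) + 2) * (1 + E ^ 2)⁻¹)
    (integrable_inv_one_add_sq.const_mul _) hcont.aestronglyMeasurable ?_
  filter_upwards with E
  have hd0 : 0 < ‖z ^ 2 - (E : ℂ) ^ 2‖ := by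
    simpa [norm_pos_iff] using denom_ne_zero z hre him E
  have h1E : (0:ℝ) < 1 + E ^ 2 := by positivity
  have hnorm : ‖Complex.exp (-Complex.I * t * E) / (z ^ 2 - (E : ℂ) ^ 2)‖
      = 1 / ‖z ^ 2 - (E : ℂ) ^ 2‖ := by
    rw [norm_div, Complex.norm_exp]
    congr 2
    simp [Complex.mul_re]
  rw [hnorm,
    show ((2 + 2 * ‖z‖ ^ 2) / (2 * z.re * (-z.im)) + 2) * (1 + E ^ 2)⁻¹
      = ((2 + 2 * ‖z‖ ^ 2) / (2 * z.re * (-z.im)) + 2) / (1 + E ^ 2) from by ring,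
    div_le_div_iff₀ hd0 h1E, one_mul]
  exact key_ineq z hre him E

open Real Set Filter FourierTransform in
private lemma fourier_g (z : ℂ) (hre : 0 < z.re) (him : z.im < 0) (ξ : ℝ) :
    𝓕 (fun s : ℝ => Complex.I * Complex.exp (-Complex.I * |s| * z) / (2 * z)) ξ
      = 1 / (z ^ 2 - ((2 * π * ξ : ℝ) : ℂ) ^ 2) := by
  have hz : z ≠ 0 := by
    intro h; rw [h] at hre; simp at hre
  have hc : (-Complex.I * z).re < 0 := by
    simpa [Complex.mul_re] using him
  have hpt : ∀ v : ℝ, Complex.exp (↑(-2 * π * v * ξ) * Complex.I) •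
      (Complex.I * Complex.exp (-Complex.I * |v| * z) / (2 * z))
      = (Complex.I / (2 * z)) *
        Complex.exp (-Complex.I * ((2 * π * ξ : ℝ) : ℂ) * v + (-Complex.I * z) * |v|) := by
    intro v
    rw [smul_eq_mul, Complex.exp_add,
      show (-Complex.I * ((2 * π * ξ : ℝ) : ℂ) * v) = (↑(-2 * π * v * ξ) * Complex.I) from by
        push_cast; ring,
      show ((-Complex.I * z) * ((|v| : ℝ) : ℂ)) = -Complex.I * ((|v| : ℝ) : ℂ) * z from by ring]
    ring
  rw [Real.fourier_real_eq_integral_exp_smul]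
  simp_rw [hpt]
  rw [integral_const_mul, (exp_abs_key hc (2 * π * ξ)).2]
  have hd := denom_ne_zero z hre him (2 * π * ξ)
  have hI : (Complex.I : ℂ) ^ 2 = -1 := Complex.I_sq
  have h2 : (-Complex.I * z) ^ 2 + ((2 * π * ξ : ℝ) : ℂ) ^ 2
      = -(z ^ 2 - ((2 * π * ξ : ℝ) : ℂ) ^ 2) := by
    linear_combination (z ^ 2) * hI
  have h3 : -(z ^ 2 - ((2 * π * ξ : ℝ) : ℂ) ^ 2) ≠ 0 := neg_ne_zero.2 hd
  have h2z : (2 : ℂ) * z ≠ 0 := by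
    simp [hz]
  rw [h2, div_mul_div_comm, div_eq_div_iff (mul_ne_zero h2z h3) hd]
  linear_combination (2 * z * (z ^ 2 - ((2 * π * ξ : ℝ) : ℂ) ^ 2)) * hI

open Real Set Filter FourierTransform in
/-- for `z ∈ ℂ` with `Re z > 0` and `Im z < 0` (Feynman prescription) and
`t ∈ ℝ`, the energy integrand `E ↦ e^{−itE}/(z² − E²)` is Lebesgue integrable on ℝ and
`(1/2π) ∫ e^{−itE}/(z² − E²) dE = i e^{−i|t|z}/(2z)`. -/
theorem feynman_energy_integral (z : ℂ) (hre : 0 < z.re) (him : z.im < 0) (t : ℝ) :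
    Integrable (fun E : ℝ => Complex.exp (-Complex.I * t * E) / (z ^ 2 - (E : ℂ) ^ 2)) ∧
      (1 / (2 * (Real.pi : ℂ))) *
          ∫ E : ℝ, Complex.exp (-Complex.I * t * E) / (z ^ 2 - (E : ℂ) ^ 2) =
        Complex.I * Complex.exp (-Complex.I * |t| * z) / (2 * z) := by
  have hz : z ≠ 0 := by
    intro h; rw [h] at hre; simp at hre
  have hc : (-Complex.I * z).re < 0 := by
    simpa [Complex.mul_re] using him
  set g : ℝ → ℂ := fun s => Complex.I * Complex.exp (-Complex.I * |s| * z) / (2 * z) with hgdef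
  have hgeq : ∀ s : ℝ, g s = (Complex.I / (2 * z)) *
      Complex.exp (-Complex.I * ((0:ℝ) : ℂ) * s + (-Complex.I * z) * |s|) := by
    intro s
    rw [hgdef]
    simp only [Complex.ofReal_zero, mul_zero, zero_mul, zero_add]
    rw [show ((-Complex.I * z) * ((|s| : ℝ) : ℂ)) = -Complex.I * ((|s| : ℝ) : ℂ) * z from by ring]
    ring
  have hgint : Integrable g := by
    refine ((exp_abs_key hc 0).1.const_mul (Complex.I / (2 * z))).congr ?_
    filter_upwards with s using (hgeq s).symm
  have hgcont : Continuous g := by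
    rw [hgdef]
    exact (continuous_const.mul (Complex.continuous_exp.comp (by continuity))).div_const _
  have h𝓕 : 𝓕 g = fun ξ : ℝ => 1 / (z ^ 2 - ((2 * π * ξ : ℝ) : ℂ) ^ 2) :=
    funext fun ξ => fourier_g z hre him ξ
  have hbase : Integrable (fun E : ℝ => 1 / (z ^ 2 - (E : ℂ) ^ 2)) := by
    refine (integrable_target z hre him 0).congr ?_
    filter_upwards with E
    norm_num
  have h𝓕int : Integrable (𝓕 g) := by
    rw [h𝓕]
    exact hbase.comp_mul_left' (R := 2 * π) (by positivity : (0:ℝ) < 2 * π).ne'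
  have hinv := hgint.fourierInv_fourier_eq (v := t) h𝓕int hgcont.continuousAt
  rw [h𝓕, Real.fourierInv_eq_fourier_neg,
    Real.fourier_real_eq_integral_exp_smul] at hinv
  have hpt2 : ∀ v : ℝ, Complex.exp (↑(-2 * π * v * -t) * Complex.I) •
      ((1:ℂ) / (z ^ 2 - ((2 * π * v : ℝ) : ℂ) ^ 2))
      = (fun E : ℝ => Complex.exp (-Complex.I * t * E) / (z ^ 2 - (E : ℂ) ^ 2)) ((-(2 * π)) * v) := by
    intro v
    rw [smul_eq_mul]
    simp only []
    rw [show Complex.exp (-Complex.I * ↑t * ((((-(2 * π)) * v : ℝ)) : ℂ))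
        = Complex.exp (↑(-2 * π * v * -t) * Complex.I) from by push_cast; congr 1; ring,
      show (z ^ 2 - ((((-(2 * π)) * v : ℝ)) : ℂ) ^ 2) = z ^ 2 - ((2 * π * v : ℝ) : ℂ) ^ 2
        from by push_cast; ring]
    ring
  simp_rw [hpt2] at hinv
  rw [MeasureTheory.Measure.integral_comp_mul_left
    (fun E : ℝ => Complex.exp (-Complex.I * t * E) / (z ^ 2 - (E : ℂ) ^ 2)) (-(2 * π))] at hinv
  refine ⟨integrable_target z hre him t, ?_⟩
  have hgt : g t = Complex.I * Complex.exp (-Complex.I * ((|t| : ℝ) : ℂ) * z) / (2 * z) := rfl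
  rw [← hgt, ← hinv, abs_inv, abs_neg, abs_of_pos (by positivity : (0:ℝ) < 2 * π),
    Complex.real_smul]
  push_cast
  have hπ : ((π : ℝ) : ℂ) ≠ 0 := by
    exact_mod_cast Real.pi_ne_zero
  field_simp
end

section
/- Let ω > 0 and t ∈ ℝ. Then the Feynman-prescription energy integral has the limit lim_{δ → 0⁺} (1/2π) ∫_ℝ e^{−i t E} / (ω² − E² − i δ) dE = i · e^{−i |t| ω} / (2ω), where for each δ > 0 the integrand is Lebesgue integrable on ℝ. -/
/-!
For `Im z < 0` the function `s ↦ i e^{-iz|s|} / (2z)` is integrable, and splitting its Fourier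
integral at `0` leaves two elementary exponential integrals, which add up to `(z² - (2πξ)²)⁻¹`.
This transform decays like `ξ⁻²`, hence is integrable, so Fourier inversion evaluates
`(1/2π) ∫ e^{-itE} / (z² - E²) dE` as `i e^{-iz|t|} / (2z)` without any contour integration.
For `z` the principal square root of `ω² - iδ`, which lies in the lower half-plane and tends to `ω`
as `δ → 0⁺`, the limit follows by continuity of this closed form.
-/

open MeasureTheory Filter
open Set Complex FourierTransform
open scoped Real

lemma fourier_const_mul (a : ℂ) (f : ℝ → ℂ) (ξ : ℝ) :
    𝓕 (fun s => a * f s) ξ = a * 𝓕 f ξ := by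
  simp only [Real.fourier_real_eq_integral_exp_smul, smul_eq_mul, mul_left_comm _ a,
    integral_const_mul]

lemma integrable_cexp_mul_abs {c : ℂ} (hc : c.re < 0) :
    Integrable fun s : ℝ => exp (c * |s|) := by
  have hIoi : IntegrableOn (fun s : ℝ => exp (c * |s|)) (Ioi 0) :=
    (integrableOn_exp_mul_complex_Ioi hc 0).congr_fun
      (fun s hs => by simp [abs_of_pos (mem_Ioi.mp hs)]) measurableSet_Ioi
  have hIic : IntegrableOn (fun s : ℝ => exp (c * |s|)) (Iic 0) :=
    (integrableOn_exp_mul_complex_Iic (a := -c) (by simpa) 0).congr_fun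
      (fun s hs => by simp [abs_of_nonpos (mem_Iic.mp hs)]) measurableSet_Iic
  rw [← integrableOn_univ, ← Iic_union_Ioi (a := (0 : ℝ))]
  exact hIic.union hIoi

lemma fourier_cexp_mul_abs {c : ℂ} (hc : c.re < 0) (ξ : ℝ) :
    𝓕 (fun s : ℝ => exp (c * |s|)) ξ = -2 * c / (c ^ 2 + (2 * π * ξ) ^ 2) := by
  set b : ℂ := 2 * π * ξ * I
  have hb_re : b.re = 0 := by simp [b]
  have h_Ioi : (c - b).re < 0 := by simpa [hb_re] using hc
  have h_Iic : 0 < (-c - b).re := by simpa [hb_re] using hc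
  have eq_Ioi : EqOn (fun s : ℝ => exp (↑(-2 * π * s * ξ) * I) • exp (c * |s|))
      (fun s : ℝ => exp ((c - b) * s)) (Ioi 0) := fun s hs => by
    dsimp only
    rw [abs_of_pos (mem_Ioi.mp hs), smul_eq_mul, ← exp_add]
    congr 1
    push_cast
    ring
  have eq_Iic : EqOn (fun s : ℝ => exp (↑(-2 * π * s * ξ) * I) • exp (c * |s|))
      (fun s : ℝ => exp ((-c - b) * s)) (Iic 0) := fun s hs => by
    dsimp only
    rw [abs_of_nonpos (mem_Iic.mp hs), smul_eq_mul, ← exp_add]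
    congr 1
    push_cast
    ring
  rw [Real.fourier_real_eq_integral_exp_smul, ← intervalIntegral.integral_Iic_add_Ioi
      ((integrableOn_exp_mul_complex_Iic h_Iic 0).congr_fun eq_Iic.symm measurableSet_Iic)
      ((integrableOn_exp_mul_complex_Ioi h_Ioi 0).congr_fun eq_Ioi.symm measurableSet_Ioi),
    setIntegral_congr_fun measurableSet_Iic eq_Iic, setIntegral_congr_fun measurableSet_Ioi eq_Ioi,
    integral_exp_mul_complex_Iic h_Iic, integral_exp_mul_complex_Ioi h_Ioi]
  have h₁ : c - b ≠ 0 := fun h => by simp [h] at h_Ioi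
  have h₂ : -c - b ≠ 0 := fun h => by simp [h] at h_Iic
  have hsq : c ^ 2 + (2 * π * ξ) ^ 2 = (c - b) * -(-c - b) := by
    linear_combination (2 * π * ξ : ℂ) ^ 2 * I_sq
  rw [hsq]
  simp only [ofReal_zero, mul_zero, exp_zero]
  field_simp
  ring

lemma im_sq_le_norm_sq_sub_ofReal_sq (z : ℂ) (E : ℝ) : z.im ^ 2 ≤ ‖z ^ 2 - E ^ 2‖ := by
  rw [sq_sub_sq, norm_mul, ← sq_abs, sq]
  have h₁ : |z.im| ≤ ‖z + E‖ := by simpa using abs_im_le_norm (z + E)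
  have h₂ : |z.im| ≤ ‖z - E‖ := by simpa using abs_im_le_norm (z - E)
  gcongr

lemma norm_inv_sub_ofReal_sq_le {v : ℂ} {m : ℝ} (hm : 0 < m) (hv : ∀ E : ℝ, m ≤ ‖v - E ^ 2‖)
    (E : ℝ) : ‖(v - E ^ 2)⁻¹‖ ≤ (‖1 + v‖ / m + 1) * (1 + E ^ 2)⁻¹ := by
  have hd : v - E ^ 2 ≠ 0 := norm_pos_iff.mp (hm.trans_le (hv E))
  have key : ((1 + E ^ 2 : ℝ) : ℂ) * (v - E ^ 2)⁻¹ = (1 + v) * (v - E ^ 2)⁻¹ - 1 := by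
    field_simp
    push_cast
    ring
  rw [← div_eq_mul_inv, le_div_iff₀' (by positivity)]
  calc (1 + E ^ 2) * ‖(v - E ^ 2)⁻¹‖ = ‖(1 + v) * (v - E ^ 2)⁻¹ - 1‖ := by
        rw [← key, norm_mul, norm_real, Real.norm_of_nonneg (by positivity)]
    _ ≤ ‖1 + v‖ * ‖(v - E ^ 2)⁻¹‖ + 1 := by
        simpa using norm_sub_le ((1 + v) * (v - E ^ 2)⁻¹) 1
    _ ≤ ‖1 + v‖ / m + 1 := by
        rw [norm_inv, ← div_eq_mul_inv]
        gcongr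
        exact hv E

lemma integrable_inv_sq_sub_ofReal_sq {z : ℂ} (hz : z.im ≠ 0) :
    Integrable fun E : ℝ => (z ^ 2 - E ^ 2)⁻¹ :=
  (integrable_inv_one_add_sq.const_mul _).mono' (by fun_prop) <| Eventually.of_forall <|
    norm_inv_sub_ofReal_sq_le (by positivity) (im_sq_le_norm_sq_sub_ofReal_sq z)

lemma integrable_cexp_mul_div_sq_sub_ofReal_sq {z : ℂ} (hz : z.im ≠ 0) (t : ℝ) :
    Integrable fun E : ℝ => exp (-I * t * E) / (z ^ 2 - E ^ 2) := by
  simp_rw [div_eq_mul_inv]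
  exact (integrable_inv_sq_sub_ofReal_sq hz).bdd_mul (c := 1) (by fun_prop)
    (Eventually.of_forall fun E => by simp [norm_exp])

noncomputable def feynmanPropagator (z : ℂ) (s : ℝ) : ℂ := I / (2 * z) * exp (-I * z * |s|)

lemma integrable_feynmanPropagator {z : ℂ} (hz : z.im < 0) :
    Integrable (feynmanPropagator z) :=
  (integrable_cexp_mul_abs (c := -I * z) (by simpa using hz)).const_mul _

lemma continuous_feynmanPropagator (z : ℂ) : Continuous (feynmanPropagator z) := by
  unfold feynmanPropagator
  fun_prop

lemma continuousAt_feynmanPropagator {z : ℂ} (hz : z ≠ 0) (s : ℝ) :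
    ContinuousAt (fun w => feynmanPropagator w s) z := by
  unfold feynmanPropagator
  exact (continuousAt_const.div (by fun_prop) (mul_ne_zero two_ne_zero hz)).mul (by fun_prop)

lemma fourier_feynmanPropagator {z : ℂ} (hz : z.im < 0) (ξ : ℝ) :
    𝓕 (feynmanPropagator z) ξ = (z ^ 2 - (2 * π * ξ) ^ 2)⁻¹ := by
  have hz0 : z ≠ 0 := fun h => by simp [h] at hz
  unfold feynmanPropagator
  rw [fourier_const_mul, fourier_cexp_mul_abs (by simpa using hz)]
  have hsq : (-I * z) ^ 2 + (2 * π * ξ : ℂ) ^ 2 = -(z ^ 2 - (2 * π * ξ) ^ 2) := by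
    linear_combination z ^ 2 * I_sq
  rw [hsq, div_neg, div_eq_mul_inv, div_eq_mul_inv, mul_inv]
  set D := z ^ 2 - (2 * π * ξ : ℂ) ^ 2
  linear_combination (-I ^ 2 * D⁻¹) * mul_inv_cancel₀ hz0 - D⁻¹ * I_sq

lemma feynmanPropagator_eq_integral {z : ℂ} (hz : z.im < 0) (t : ℝ) :
    feynmanPropagator z t = 1 / (2 * (π : ℂ)) * ∫ E : ℝ, exp (-I * t * E) / (z ^ 2 - E ^ 2) := by
  set h : ℝ → ℂ := fun E => exp (-I * t * E) / (z ^ 2 - E ^ 2)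
  have hF : 𝓕 (feynmanPropagator z) = fun ξ => (fun E : ℝ => (z ^ 2 - E ^ 2)⁻¹) (2 * π * ξ) := by
    ext ξ
    rw [fourier_feynmanPropagator hz]
    push_cast
    rfl
  have hF_int : Integrable (𝓕 (feynmanPropagator z)) :=
    hF ▸ (integrable_inv_sq_sub_ofReal_sq hz.ne).comp_mul_left' (by positivity)
  have hF_eq (ξ : ℝ) :
      exp (↑(-2 * π * ξ * -t) * I) • 𝓕 (feynmanPropagator z) ξ = h (-(2 * π) * ξ) := by
    simp only [hF, h, smul_eq_mul, div_eq_mul_inv]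
    push_cast
    ring_nf
  calc feynmanPropagator z t = 𝓕⁻ (𝓕 (feynmanPropagator z)) t :=
        ((integrable_feynmanPropagator hz).fourierInv_fourier_eq hF_int
          (continuous_feynmanPropagator z).continuousAt).symm
    _ = 1 / (2 * (π : ℂ)) * ∫ E : ℝ, h E := by
        rw [Real.fourierInv_eq_fourier_neg, Real.fourier_real_eq_integral_exp_smul,
          integral_congr_ae (Eventually.of_forall hF_eq), Measure.integral_comp_mul_left h,
          abs_inv, abs_neg, abs_of_pos Real.two_pi_pos, Complex.real_smul]
        push_cast
        ring

lemma im_sqrt_neg_of_im_neg {v : ℂ} (hv : v.im < 0) : v.sqrt.im < 0 := by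
  rw [Complex.sqrt, cpow_inv_two_im_eq_neg_sqrt hv, neg_lt_zero, Real.sqrt_pos]
  linarith [abs_re_lt_norm.mpr hv.ne, le_abs_self v.re]

lemma sqrt_ofReal_sq {ω : ℝ} (hω : 0 ≤ ω) : ((ω : ℂ) ^ 2).sqrt = ω := by
  rw [← ofReal_pow, Complex.sqrt_of_nonneg (zero_le_real.mpr (sq_nonneg ω)), ofReal_re,
    Real.sqrt_sq hω]

/-- the Feynman-prescription energy integral: for `ω > 0` and `t ∈ ℝ`,
the integrand `E ↦ e^{−itE}/(ω² − E² − iδ)` is integrable for every `δ > 0`, and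
`(1/2π) ∫ e^{−itE}/(ω² − E² − iδ) dE → i e^{−i|t|ω}/(2ω)` as `δ → 0⁺`. -/
theorem feynman_prescription_limit (ω : ℝ) (hω : 0 < ω) (t : ℝ) :
    (∀ δ : ℝ, 0 < δ →
        Integrable (fun E : ℝ =>
          Complex.exp (-Complex.I * t * E) / ((ω : ℂ) ^ 2 - (E : ℂ) ^ 2 - Complex.I * δ))) ∧
      Tendsto (fun δ : ℝ =>
          (1 / (2 * (Real.pi : ℂ))) *
            ∫ E : ℝ, Complex.exp (-Complex.I * t * E) /
              ((ω : ℂ) ^ 2 - (E : ℂ) ^ 2 - Complex.I * δ))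
        (nhdsWithin 0 (Set.Ioi 0))
        (nhds (Complex.I * Complex.exp (-Complex.I * |t| * ω) / (2 * ω))) := by
  set z : ℝ → ℂ := fun δ => ((ω : ℂ) ^ 2 - I * δ).sqrt
  have hz_sq (δ E : ℝ) : (ω : ℂ) ^ 2 - E ^ 2 - I * δ = z δ ^ 2 - E ^ 2 := by
    rw [show z δ ^ 2 = (ω : ℂ) ^ 2 - I * δ from cpow_ofNat_inv_pow _ 2, sub_right_comm]
  have hz_im (δ : ℝ) (hδ : 0 < δ) : (z δ).im < 0 :=
    im_sqrt_neg_of_im_neg (by simpa [← ofReal_pow] using hδ)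
  simp_rw [hz_sq]
  refine ⟨fun δ hδ => integrable_cexp_mul_div_sq_sub_ofReal_sq (hz_im δ hδ).ne t, ?_⟩
  have hz_cont : ContinuousAt z 0 :=
    (continuousAt_cpow_const (by simpa [← ofReal_pow] using pow_pos hω 2)).comp (by fun_prop)
  have hz_zero : z 0 = ω := by simp [z, sqrt_ofReal_sq hω.le]
  have hlim := ((continuousAt_feynmanPropagator (hz_zero ▸ ofReal_ne_zero.mpr hω.ne') t).comp
    hz_cont).tendsto.mono_left (nhdsWithin_le_nhds (s := Ioi 0))
  have hval : feynmanPropagator ω t = I * exp (-I * |t| * ω) / (2 * ω) := by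
    rw [feynmanPropagator, mul_right_comm (-I)]
    ring
  rw [Function.comp_apply, hz_zero, hval] at hlim
  exact hlim.congr' (eventually_nhdsWithin_of_forall fun δ hδ =>
    feynmanPropagator_eq_integral (hz_im δ hδ) t)
end
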